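/- Let τ be a Hermitian unital linear functional on ℂ⟨x⟩ with restrictions τ_i := τ restricted to ℂ⟨x_i⟩. Then for every self-adjoint p ∈ ℂ⟨x⟩ one has χ_{orb,R}(τ) ≤ τ(p) + π_{orb,R}(p : (τ_i)); consequently χ_{orb,R}(τ) ≤ η_{orb,R}(τ). -/

import Mathlib

/-!
Orbital free pressure and its Legendre transform (Hiai–Ueda).

Common infrastructure: the free unital complex *-algebra on self-adjoint generators,
matrix microstate sets, the orbital free pressure, the orbital η-entropy, the orbital
free entropy; Lebesgue measure on self-adjoint matrices, the free pressure, free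
entropy and η-entropy; Gibbs (micro-)ensembles.

The Haar probability measures `γ_{U(N)}` on the unitary groups are formalized as a
family of left-invariant Borel probability measures (which uniquely determines them).
-/

open MeasureTheory Filter Topology
open scoped BigOperators ENNReal TensorProduct ComplexOrder

noncomputable section

namespace OrbFP

/-- The algebra of `N × N` complex matrices. -/
abbrev Mat (N : ℕ) := Matrix (Fin N) (Fin N) ℂ

/-- The normalized trace `tr_N`. -/
def trN (N : ℕ) (A : Mat N) : ℂ := A.trace / (N : ℂ)

/-- The (ℓ²-)operator norm of a matrix. -/
def opNorm {N : ℕ} (A : Mat N) : ℝ := ‖Matrix.toEuclideanCLM (𝕜 := ℂ) A‖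

/-- The unitary group `U(N)`. -/
abbrev UN (N : ℕ) := Matrix.unitaryGroup (Fin N) ℂ

instance (N : ℕ) : MeasurableSpace (UN N) := borel _
instance (N : ℕ) : BorelSpace (UN N) := ⟨rfl⟩
instance (N : ℕ) : MeasurableSpace (Mat N) := borel _
instance (N : ℕ) : BorelSpace (Mat N) := ⟨rfl⟩

/-- The free unital complex *-algebra on self-adjoint generators indexed by `X`. -/
abbrev FAlg (X : Type) := FreeAlgebra ℂ X

/-- Coefficient-wise complex conjugation on the free algebra. -/
def conjCoeff {X : Type} (p : FAlg X) : FAlg X :=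
  (FreeAlgebra.equivMonoidAlgebraFreeMonoid (R := ℂ) (X := X)).symm
    (MonoidAlgebra.ofCoeff (Finsupp.mapRange (starRingEnd ℂ) (map_zero _)
      (FreeAlgebra.equivMonoidAlgebraFreeMonoid (R := ℂ) (X := X) p).coeff))

/-- The star operation of the free complex *-algebra with self-adjoint generators:
reverse words (the `star` of `FreeAlgebra`) and conjugate the coefficients. -/
def fstar {X : Type} (p : FAlg X) : FAlg X := star (conjCoeff p)

/-- Self-adjointness in the free complex *-algebra. -/
def IsSA {X : Type} (p : FAlg X) : Prop := fstar p = p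

/-- A Hermitian unital linear functional. -/
def IsHermState {X : Type} (τ : FAlg X →ₗ[ℂ] ℂ) : Prop :=
  τ 1 = 1 ∧ ∀ p, τ (fstar p) = starRingEnd ℂ (τ p)

/-- Ordered product of a word of matrices. -/
def wordMat {N : ℕ} {κ : Type} (A : κ → Mat N) (w : List κ) : Mat N := (w.map A).prod

/-- Ordered product of a word of generators in the free algebra. -/
def wordAlg {κ : Type} (w : List κ) : FAlg κ := (w.map (FreeAlgebra.ι ℂ)).prod

/-- The microstate set `Γ_R(τ; N, m, δ)` of a functional on the free algebra on `κ`: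
tuples of self-adjoint matrices of operator norm at most `R` whose normalized trace of
every word of length `1 ≤ l ≤ m` is `δ`-close to the corresponding moment of `τ`. -/
def microSet {κ : Type} (R : ℝ) (τ : FAlg κ →ₗ[ℂ] ℂ) (N m : ℕ) (δ : ℝ) :
    Set (κ → Mat N) :=
  {A | (∀ j, (A j).IsHermitian ∧ opNorm (A j) ≤ R) ∧
    ∀ w : List κ, w ≠ [] → w.length ≤ m →
      ‖trN N (wordMat A w) - τ (wordAlg w)‖ < δ}

/-- `τ` has finite-dimensional approximants. -/
def HasFDA {κ : Type} (R : ℝ) (τ : FAlg κ →ₗ[ℂ] ℂ) : Prop :=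
  ∀ (m : ℕ) (δ : ℝ), 0 < δ → ∃ N, (microSet R τ N m δ).Nonempty

variable {ι : Type} [Fintype ι]

/-- The index of the generators `x_{ij}`, `i ∈ ι`, `1 ≤ j ≤ r i`. -/
abbrev gen (r : ι → ℕ) := Σ i : ι, Fin (r i)

/-- Evaluation of the full free algebra at a family of matrix tuples. -/
def evalA {r : ι → ℕ} {N : ℕ} (A : ∀ i, Fin (r i) → Mat N) :
    FAlg (gen r) →ₐ[ℂ] Mat N :=
  FreeAlgebra.lift ℂ fun p : gen r => A p.1 p.2

/-- The canonical embedding `ℂ⟨x_i⟩ → ℂ⟨x⟩`. -/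
def inclAlg (r : ι → ℕ) (i : ι) : FAlg (Fin (r i)) →ₐ[ℂ] FAlg (gen r) :=
  FreeAlgebra.lift ℂ fun j => FreeAlgebra.ι ℂ (⟨i, j⟩ : gen r)

/-- The restriction of a functional on `ℂ⟨x⟩` to `ℂ⟨x_i⟩`. -/
def restr {r : ι → ℕ} (τ : FAlg (gen r) →ₗ[ℂ] ℂ) (i : ι) :
    FAlg (Fin (r i)) →ₗ[ℂ] ℂ :=
  τ ∘ₗ (inclAlg r i).toLinearMap

/-- The embedding of the free algebra of a sub-system of the variables. -/
def inclSub {r : ι → ℕ} (P : ι → Prop) :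
    FAlg (gen fun i : Subtype P => r i.1) →ₐ[ℂ] FAlg (gen r) :=
  FreeAlgebra.lift ℂ fun p => FreeAlgebra.ι ℂ (⟨p.1.1, p.2⟩ : gen r)

/-- Restriction of a functional to a sub-system of the variables. -/
def restrSub {r : ι → ℕ} (P : ι → Prop) (τ : FAlg (gen r) →ₗ[ℂ] ℂ) :
    FAlg (gen fun i : Subtype P => r i.1) →ₗ[ℂ] ℂ :=
  τ ∘ₗ (inclSub P).toLinearMap

/-- The conjugated family `(V_i A_i V_i^*)_i`. -/
def conjFam {r : ι → ℕ} {N : ℕ} (V : ι → UN N) (A : ∀ i, Fin (r i) → Mat N) :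
    ∀ i, Fin (r i) → Mat N :=
  fun i j => (V i : Mat N) * A i j * star (V i : Mat N)

/-- The Gibbs weight `exp(-N² tr_N(h((V_i A_i V_i^*)_i)))`. -/
def gibbsWt {r : ι → ℕ} {N : ℕ} (h : FAlg (gen r)) (A : ∀ i, Fin (r i) → Mat N)
    (V : ι → UN N) : ℝ :=
  Real.exp (-(N : ℝ) ^ 2 * (trN N (evalA (conjFam V A) h)).re)

/-- The product `∏_i Γ_R(τ_i; N, m, δ)` of the microstate sets. -/
def microProd (R : ℝ) {r : ι → ℕ} (τs : ∀ i, FAlg (Fin (r i)) →ₗ[ℂ] ℂ)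
    (N m : ℕ) (δ : ℝ) : Set (∀ i, Fin (r i) → Mat N) :=
  {A | ∀ i, A i ∈ microSet R (τs i) N m δ}

/-- The finite-`N` orbital free pressure `π_{orb,R}(h : (τ_i); N, m, δ)`
(`-∞` when some microstate set is empty). -/
def piOrbN (γ : ∀ N, Measure (UN N)) (R : ℝ) {r : ι → ℕ} (h : FAlg (gen r))
    (τs : ∀ i, FAlg (Fin (r i)) →ₗ[ℂ] ℂ) (N m : ℕ) (δ : ℝ) : EReal :=
  ⨆ A ∈ microProd R τs N m δ,
    ((Real.log (∫ V : ι → UN N, gibbsWt h A V ∂(Measure.pi fun _ => γ N)) : ℝ) : EReal)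

/-- The orbital free pressure `π_{orb,R}(h : (τ_i))`. -/
def piOrb (γ : ∀ N, Measure (UN N)) (R : ℝ) {r : ι → ℕ} (h : FAlg (gen r))
    (τs : ∀ i, FAlg (Fin (r i)) →ₗ[ℂ] ℂ) : EReal :=
  ⨅ (m : ℕ) (δ : ℝ) (_ : 0 < δ),
    Filter.limsup
      (fun N : ℕ => ((((N : ℝ) ^ 2)⁻¹ : ℝ) : EReal) * piOrbN γ R h τs N m δ)
      Filter.atTop

/-- The "universal" `R`-norm `‖h‖_R`: the supremum of the operator norms of all
evaluations of `h` at families of self-adjoint matrices of norm at most `R`. -/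
def normR (R : ℝ) {r : ι → ℕ} (h : FAlg (gen r)) : ℝ :=
  sSup {t : ℝ | ∃ (N : ℕ) (A : ∀ i, Fin (r i) → Mat N),
    (∀ i j, (A i j).IsHermitian ∧ opNorm (A i j) ≤ R) ∧ t = opNorm (evalA A h)}

/-- The minus Legendre transform `inf_h (φ(h) + π_{orb,R}(h : (τ_i)))` of the orbital
free pressure, relative to `(τ_i)`. -/
def etaOrbRel (γ : ∀ N, Measure (UN N)) (R : ℝ) {r : ι → ℕ}
    (τ : FAlg (gen r) →ₗ[ℂ] ℂ) (τs : ∀ i, FAlg (Fin (r i)) →ₗ[ℂ] ℂ) : EReal :=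
  ⨅ (h : FAlg (gen r)) (_ : IsSA h),
    (((τ h).re : ℝ) : EReal) + piOrb γ R h τs

/-- The orbital `η`-entropy `η_{orb,R}(τ)`. -/
def etaOrb (γ : ∀ N, Measure (UN N)) (R : ℝ) {r : ι → ℕ}
    (τ : FAlg (gen r) →ₗ[ℂ] ℂ) : EReal :=
  etaOrbRel γ R τ (restr τ)

/-- The microstate set `Γ_R(τ; N, m, δ)` of a functional on the full free algebra. -/
def microFull (R : ℝ) {r : ι → ℕ} (τ : FAlg (gen r) →ₗ[ℂ] ℂ) (N m : ℕ) (δ : ℝ) :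
    Set (∀ i, Fin (r i) → Mat N) :=
  {A | (∀ i j, (A i j).IsHermitian ∧ opNorm (A i j) ≤ R) ∧
    ∀ w : List (gen r), w ≠ [] → w.length ≤ m →
      ‖trN N (wordMat (fun p : gen r => A p.1 p.2) w) - τ (wordAlg w)‖ < δ}

/-- `τ` (on the full algebra) has finite-dimensional approximants. -/
def HasFDAFull (R : ℝ) {r : ι → ℕ} (τ : FAlg (gen r) →ₗ[ℂ] ℂ) : Prop :=
  ∀ (m : ℕ) (δ : ℝ), 0 < δ → ∃ N, (microFull R τ N m δ).Nonempty

/-- The orbital microstate set `Γ_orb(τ : (A_i); N, m, δ)`. -/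
def orbSet (R : ℝ) {r : ι → ℕ} (τ : FAlg (gen r) →ₗ[ℂ] ℂ) {N : ℕ}
    (A : ∀ i, Fin (r i) → Mat N) (m : ℕ) (δ : ℝ) : Set (ι → UN N) :=
  {V | conjFam V A ∈ microFull R τ N m δ}

/-- The orbital free entropy `χ_{orb,R}(τ)`. -/
def chiOrb (γ : ∀ N, Measure (UN N)) (R : ℝ) {r : ι → ℕ}
    (τ : FAlg (gen r) →ₗ[ℂ] ℂ) : EReal :=
  ⨅ (m : ℕ) (δ : ℝ) (_ : 0 < δ),
    Filter.limsup
      (fun N : ℕ => ((((N : ℝ) ^ 2)⁻¹ : ℝ) : EReal) *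
        ⨆ A ∈ microProd R (restr τ) N m δ,
          ENNReal.log ((Measure.pi fun _ : ι => γ N) (orbSet R τ A m δ)))
      Filter.atTop

/-- A tracial `R₀`-state on `ℂ⟨x⟩`. -/
def IsTracialRState {r : ι → ℕ} (R₀ : ℝ) (τ : FAlg (gen r) →ₗ[ℂ] ℂ) : Prop :=
  IsHermState τ ∧ (∀ p q, τ (p * q) = τ (q * p)) ∧
  (∀ p, 0 ≤ (τ (fstar p * p)).re) ∧
  ∀ (i : ι) (j : Fin (r i)) (k : ℕ) (p : FAlg (gen r)),
    (τ (fstar p * FreeAlgebra.ι ℂ (⟨i, j⟩ : gen r) ^ (2 * k) * p)).re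
      ≤ R₀ ^ (2 * k) * (τ (fstar p * p)).re

/-- `τ` is the free product of its restrictions `τ_i`: alternating words in the
`τ`-centered subalgebras `ℂ⟨x_i⟩` have vanishing `τ`-value. -/
def IsFreeProduct {r : ι → ℕ} (τ : FAlg (gen r) →ₗ[ℂ] ℂ) : Prop :=
  ∀ (k : ℕ), 0 < k → ∀ (idx : Fin k → ι) (p : ∀ l, FAlg (Fin (r (idx l)))),
    (∀ l, τ (inclAlg r (idx l) (p l)) = 0) →
    (∀ (l : Fin k) (hl : (l : ℕ) + 1 < k), idx l ≠ idx ⟨(l : ℕ) + 1, hl⟩) →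
    τ ((List.ofFn fun l => inclAlg r (idx l) (p l)).prod) = 0

/-- The partition function `Z_N^{(h, Ξ(N))}` of the orbital Gibbs micro-ensemble. -/
def ZOrbN (γ : ∀ N, Measure (UN N)) {r : ι → ℕ} (h : FAlg (gen r)) {N : ℕ}
    (A : ∀ i, Fin (r i) → Mat N) : ℝ :=
  ∫ V : ι → UN N, gibbsWt h A V ∂(Measure.pi fun _ => γ N)

/-- The orbital Gibbs micro-ensemble `μ_N^{(h, Ξ(N))}`. -/
def muOrbN (γ : ∀ N, Measure (UN N)) {r : ι → ℕ} (h : FAlg (gen r)) {N : ℕ}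
    (A : ∀ i, Fin (r i) → Mat N) : Measure (ι → UN N) :=
  (Measure.pi fun _ => γ N).withDensity
    fun V => ENNReal.ofReal (gibbsWt h A V / ZOrbN γ h A)

/-! ### Lebesgue measure on self-adjoint matrices and one-variable quantities -/

/-- The parametrization of self-adjoint matrices by the diagonal entries and the real
and imaginary parts of the above-diagonal entries. -/
def matOfCoord (N : ℕ) (f : Fin N × Fin N → ℝ) : Mat N :=
  Matrix.of fun p q =>
    if p = q then (f (p, p) : ℂ)
    else if p < q then (f (p, q) : ℂ) + (f (q, p) : ℂ) * Complex.I
    else (f (q, p) : ℂ) - (f (p, q) : ℂ) * Complex.I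

/-- The Lebesgue measure `Λ_N` on self-adjoint `N × N` matrices. -/
def LambdaMat (N : ℕ) : Measure (Mat N) :=
  Measure.map (matOfCoord N) (volume : Measure (Fin N × Fin N → ℝ))

/-- The product Lebesgue measure `Λ_N^{⊗n}` on `n`-tuples of self-adjoint matrices. -/
def LambdaPow (n N : ℕ) : Measure (Fin n → Mat N) :=
  Measure.map (fun f i => matOfCoord N (f i))
    (volume : Measure (Fin n → Fin N × Fin N → ℝ))

/-- Evaluation of a polynomial in `n` single variables at an `n`-tuple of matrices. -/
def evalSingle {n : ℕ} {N : ℕ} (A : Fin n → Mat N) :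
    FAlg (gen fun _ : Fin n => 1) →ₐ[ℂ] Mat N :=
  evalA fun i (_ : Fin 1) => A i

/-- The set `((M_N(ℂ)^{sa})_R)^n`. -/
def ballR (n N : ℕ) (R : ℝ) : Set (Fin n → Mat N) :=
  {A | ∀ i, (A i).IsHermitian ∧ opNorm (A i) ≤ R}

/-- The partition function `Z_{R,N}^h`. -/
def ZR (n N : ℕ) (R : ℝ) (h : FAlg (gen fun _ : Fin n => 1)) : ℝ :=
  ∫ A in ballR n N R,
    Real.exp (-(N : ℝ) ^ 2 * (trN N (evalSingle A h)).re) ∂(LambdaPow n N)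

/-- The free pressure `π_R(h)`. -/
def piR (n : ℕ) (R : ℝ) (h : FAlg (gen fun _ : Fin n => 1)) : EReal :=
  Filter.limsup
    (fun N : ℕ => ((((N : ℝ) ^ 2)⁻¹ : ℝ) : EReal) * ((Real.log (ZR n N R h) : ℝ) : EReal)
      + ((((n : ℝ) / 2 * Real.log N) : ℝ) : EReal))
    Filter.atTop

/-- The Gibbs micro-ensemble `λ_{R,N}^h`. -/
def lambdaGibbs (n N : ℕ) (R : ℝ) (h : FAlg (gen fun _ : Fin n => 1)) :
    Measure (Fin n → Mat N) :=
  ((LambdaPow n N).restrict (ballR n N R)).withDensity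
    fun A => ENNReal.ofReal
      (Real.exp (-(N : ℝ) ^ 2 * (trN N (evalSingle A h)).re) / ZR n N R h)

/-- The microstate free entropy `χ_R` of a single-variable functional. -/
def chiR1 (R : ℝ) (τ : FAlg (Fin 1) →ₗ[ℂ] ℂ) : EReal :=
  ⨅ (m : ℕ) (δ : ℝ) (_ : 0 < δ),
    Filter.limsup
      (fun N : ℕ => ((((N : ℝ) ^ 2)⁻¹ : ℝ) : EReal) *
          ENNReal.log (LambdaMat N {B : Mat N | (fun _ : Fin 1 => B) ∈ microSet R τ N m δ})
        + ((((1 : ℝ) / 2 * Real.log N) : ℝ) : EReal))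
      Filter.atTop

/-- The microstate free entropy `χ_R` of a functional on `n` single variables. -/
def chiRn (n : ℕ) (R : ℝ) (σ : FAlg (gen fun _ : Fin n => 1) →ₗ[ℂ] ℂ) : EReal :=
  ⨅ (m : ℕ) (δ : ℝ) (_ : 0 < δ),
    Filter.limsup
      (fun N : ℕ => ((((N : ℝ) ^ 2)⁻¹ : ℝ) : EReal) *
          ENNReal.log (LambdaPow n N
            {A : Fin n → Mat N | (fun i (_ : Fin 1) => A i) ∈ microFull R σ N m δ})
        + ((((n : ℝ) / 2 * Real.log N) : ℝ) : EReal))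
      Filter.atTop

/-- The `η`-entropy `η_R(τ)`, the minus Legendre transform of the free pressure. -/
def etaR (n : ℕ) (R : ℝ) (τ : FAlg (gen fun _ : Fin n => 1) →ₗ[ℂ] ℂ) : EReal :=
  ⨅ (h : FAlg (gen fun _ : Fin n => 1)) (_ : IsSA h),
    (((τ h).re : ℝ) : EReal) + piR n R h

/-! ### The doubled (tensor) orbital free pressure -/

/-- The algebraic tensor product `ℂ⟨x⟩ ⊗ ℂ⟨x⟩`. -/
abbrev TAlg (r : ι → ℕ) := TensorProduct ℂ (FAlg (gen r)) (FAlg (gen r))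

/-- The functional `τ ⊗ τ` on `ℂ⟨x⟩ ⊗ ℂ⟨x⟩`. -/
def tensFun {r : ι → ℕ} (τ : FAlg (gen r) →ₗ[ℂ] ℂ) : TAlg r →ₗ[ℂ] ℂ :=
  (TensorProduct.lid ℂ ℂ).toLinearMap ∘ₗ TensorProduct.map τ τ

/-- The normalized trace as a linear map. -/
def trLin (N : ℕ) : Mat N →ₗ[ℂ] ℂ := (N : ℂ)⁻¹ • Matrix.traceLinearMap (Fin N) ℂ ℂ

/-- The functional `tr_N ⊗ tr_N` on `M_N(ℂ) ⊗ M_N(ℂ)`. -/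
def tr2 (N : ℕ) : TensorProduct ℂ (Mat N) (Mat N) →ₗ[ℂ] ℂ :=
  (TensorProduct.lid ℂ ℂ).toLinearMap ∘ₗ TensorProduct.map (trLin N) (trLin N)

/-- Evaluation of `ℂ⟨x⟩ ⊗ ℂ⟨x⟩` at a family of matrix tuples. -/
def evalT {r : ι → ℕ} {N : ℕ} (A : ∀ i, Fin (r i) → Mat N) :
    TAlg r →ₐ[ℂ] TensorProduct ℂ (Mat N) (Mat N) :=
  Algebra.TensorProduct.map (evalA A) (evalA A)

/-- The finite-`N` doubled orbital free pressure `π^{(2)}_{orb,R}(p : (τ_i); N, m, δ)`. -/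
def pi2OrbN (γ : ∀ N, Measure (UN N)) (R : ℝ) {r : ι → ℕ} (p : TAlg r)
    (τs : ∀ i, FAlg (Fin (r i)) →ₗ[ℂ] ℂ) (N m : ℕ) (δ : ℝ) : EReal :=
  ⨆ A ∈ microProd R τs N m δ,
    ((Real.log (∫ V : ι → UN N,
        Real.exp (-(N : ℝ) ^ 2 * (tr2 N (evalT (conjFam V A) p)).re)
        ∂(Measure.pi fun _ => γ N)) : ℝ) : EReal)

/-- The doubled orbital free pressure `π^{(2)}_{orb,R}(p : (τ_i))`. -/
def pi2Orb (γ : ∀ N, Measure (UN N)) (R : ℝ) {r : ι → ℕ} (p : TAlg r)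
    (τs : ∀ i, FAlg (Fin (r i)) →ₗ[ℂ] ℂ) : EReal :=
  ⨅ (m : ℕ) (δ : ℝ) (_ : 0 < δ),
    Filter.limsup
      (fun N : ℕ => ((((N : ℝ) ^ 2)⁻¹ : ℝ) : EReal) * pi2OrbN γ R p τs N m δ)
      Filter.atTop


end OrbFP

/-!
Once `m` is large and `δ` small, `tr_N(p(B))` is uniformly `ε`-close to `τ(p)` on
`Γ_R(τ; N, m, δ)`, because `p` is a linear combination of words. On the orbital microstates the
Gibbs weight of `p` is therefore at least `exp(-N²(τ(p) + ε))`, and Markov's inequality gives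
`log γ(Γ_orb) ≤ log ∫ exp(-N² tr_N(p(VAV*))) dγ + N²(τ(p) + ε)`. Dividing by `N²` and passing to
`sup`, `limsup`, `inf` and `ε → 0` yields the inequality.
-/

namespace OrbFP

variable {ι : Type}

instance (N : ℕ) : SecondCountableTopology (Mat N) :=
  inferInstanceAs (SecondCountableTopology (Fin N → Fin N → ℂ))

instance (N : ℕ) : SecondCountableTopology (UN N) :=
  inferInstanceAs (SecondCountableTopology (UN N : Set (Mat N)))

instance (N : ℕ) : CompactSpace (UN N) := by
  have hball : IsCompact (Set.univ.pi fun _ => Set.univ.pi fun _ => Metric.closedBall (0 : ℂ) 1 :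
      Set (Mat N)) :=
    isCompact_univ_pi fun _ => isCompact_univ_pi fun _ => isCompact_closedBall 0 1
  exact isCompact_iff_compactSpace.mp <| hball.of_isClosed_subset (isClosed_unitary (R := Mat N))
    fun U hU => Set.mem_univ_pi.2 fun i => Set.mem_univ_pi.2 fun j => by
      simpa using entry_norm_bound_of_unitary hU i j

lemma trN_one {N : ℕ} (hN : N ≠ 0) : trN N (1 : Mat N) = 1 := by
  simp [trN, hN]

lemma evalA_wordAlg {r : ι → ℕ} {N : ℕ} (B : ∀ i, Fin (r i) → Mat N) (w : List (gen r)) :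
    evalA B (wordAlg w) = wordMat (fun q : gen r => B q.1 q.2) w := by
  simp [wordAlg, wordMat, map_list_prod, evalA, Function.comp_def]

lemma span_range_wordAlg {κ : Type} :
    Submodule.span ℂ (Set.range (wordAlg : List κ → FAlg κ)) = ⊤ := by
  have hrange : Set.range (wordAlg : List κ → FAlg κ) =
      (Submonoid.closure (Set.range (FreeAlgebra.ι ℂ : κ → FAlg κ)) : Set (FAlg κ)) := by
    rw [← FreeMonoid.mrange_lift]
    ext x
    simp only [Set.mem_range, SetLike.mem_coe, MonoidHom.mem_mrange, wordAlg,
      FreeMonoid.lift_apply]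
    exact FreeMonoid.ofList.exists_congr_left
  rw [hrange, ← Algebra.adjoin_eq_span, FreeAlgebra.adjoin_range_ι, Algebra.top_toSubmodule]

lemma microFull_mono {r : ι → ℕ} {R : ℝ} {τ : FAlg (gen r) →ₗ[ℂ] ℂ}
    {N m m' : ℕ} {δ δ' : ℝ} (hm : m ≤ m') (hδ : δ' ≤ δ) :
    microFull R τ N m' δ' ⊆ microFull R τ N m δ :=
  fun _ ⟨hsa, hmom⟩ => ⟨hsa, fun w hw hl => (hmom w hw (hl.trans hm)).trans_le hδ⟩

lemma microProd_mono {r : ι → ℕ} {R : ℝ} {τs : ∀ i, FAlg (Fin (r i)) →ₗ[ℂ] ℂ}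
    {N m m' : ℕ} {δ δ' : ℝ} (hm : m ≤ m') (hδ : δ' ≤ δ) :
    microProd R τs N m' δ' ⊆ microProd R τs N m δ :=
  fun _ hA i => ⟨(hA i).1, fun w hw hl => ((hA i).2 w hw (hl.trans hm)).trans_le hδ⟩

section MicrostateApprox

variable {r : ι → ℕ} (R : ℝ) (τ : FAlg (gen r) →ₗ[ℂ] ℂ)

def MicrostateApprox (p : FAlg (gen r)) : Prop :=
  ∀ ε > 0, ∃ m δ, 0 < δ ∧ ∀ N, N ≠ 0 → ∀ B ∈ microFull R τ N m δ,
    ‖trN N (evalA B p) - τ p‖ ≤ ε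

def microstateApproxSubmodule : Submodule ℂ (FAlg (gen r)) where
  carrier := {p | MicrostateApprox R τ p}
  zero_mem' ε hε := ⟨0, 1, one_pos, fun N _ B _ => by simpa [trN] using hε.le⟩
  add_mem' {a b} ha hb ε hε := by
    obtain ⟨ma, δa, hδa, ha⟩ := ha (ε / 2) (half_pos hε)
    obtain ⟨mb, δb, hδb, hb⟩ := hb (ε / 2) (half_pos hε)
    refine ⟨max ma mb, min δa δb, lt_min hδa hδb, fun N hN B hB => ?_⟩
    have ea := ha N hN B (microFull_mono (le_max_left ma mb) (min_le_left δa δb) hB)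
    have eb := hb N hN B (microFull_mono (le_max_right ma mb) (min_le_right δa δb) hB)
    calc ‖trN N (evalA B (a + b)) - τ (a + b)‖
        = ‖(trN N (evalA B a) - τ a) + (trN N (evalA B b) - τ b)‖ := by
          simp only [map_add, trN, Matrix.trace_add, add_div]; ring_nf
      _ ≤ ε := (norm_add_le _ _).trans (by linarith)
  smul_mem' c a ha ε hε := by
    obtain ⟨m, δ, hδ, ha⟩ := ha (ε / (‖c‖ + 1)) (by positivity)
    refine ⟨m, δ, hδ, fun N hN B hB => ?_⟩
    calc ‖trN N (evalA B (c • a)) - τ (c • a)‖ = ‖c‖ * ‖trN N (evalA B a) - τ a‖ := by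
          rw [← norm_mul]
          simp only [map_smul, trN, Matrix.trace_smul, smul_eq_mul]
          ring_nf
      _ ≤ ‖c‖ * (ε / (‖c‖ + 1)) := by gcongr; exact ha N hN B hB
      _ ≤ ε := by
          rw [mul_div_assoc', div_le_iff₀ (by positivity)]
          nlinarith [norm_nonneg c]

variable {R τ}

lemma microstateApprox_wordAlg (hτ1 : τ 1 = 1) (w : List (gen r)) :
    MicrostateApprox R τ (wordAlg w) := by
  intro ε hε
  cases w with
  | nil => exact ⟨0, 1, one_pos, fun N hN B _ => by simpa [wordAlg, trN_one hN, hτ1] using hε.le⟩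
  | cons x w =>
    refine ⟨(x :: w).length, ε, hε, fun N _ B hB => ?_⟩
    rw [evalA_wordAlg]
    exact (hB.2 _ (List.cons_ne_nil x w) le_rfl).le

lemma microstateApprox (hτ1 : τ 1 = 1) (p : FAlg (gen r)) : MicrostateApprox R τ p := by
  have hspan : Submodule.span ℂ (Set.range wordAlg) ≤ microstateApproxSubmodule R τ :=
    Submodule.span_le.2 (Set.range_subset_iff.2 (microstateApprox_wordAlg hτ1))
  exact hspan (span_range_wordAlg ▸ Submodule.mem_top)

end MicrostateApprox

lemma _root_.EReal.le_of_forall_pos_le_add {a b : EReal} (h : ∀ ε : ℝ, 0 < ε → a ≤ b + ε) :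
    a ≤ b := by
  refine EReal.le_of_forall_lt_iff_le.1 fun z hz => ?_
  induction b with
  | bot => simp [show a = ⊥ by simpa using h 1 one_pos]
  | top => exact absurd hz not_top_lt
  | coe b =>
    have := h (z - b) (sub_pos.2 (EReal.coe_lt_coe_iff.1 hz))
    rwa [← EReal.coe_add, add_sub_cancel] at this

lemma _root_.EReal.limsup_le_limsup_add_of_eventually_le {α : Type*} {l : Filter α} [l.NeBot]
    {f g : α → EReal} {K : ℝ} (h : ∀ᶠ x in l, f x ≤ g x + K) :
    limsup f l ≤ limsup g l + K :=
  calc limsup f l ≤ limsup (g + fun _ => (K : EReal)) l := limsup_le_limsup (h.mono fun _ hx => hx)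
    _ ≤ limsup g l + limsup (fun _ => (K : EReal)) l :=
        EReal.limsup_add_le (.inr (by simp)) (.inr (by simp))
    _ = limsup g l + K := by rw [limsup_const]

lemma _root_.MeasureTheory.log_measure_le_log_integral_sub_log {X : Type*} [MeasurableSpace X]
    {μ : Measure X} [IsFiniteMeasure μ] {g : X → ℝ} (hg0 : 0 ≤ g) (hg : Integrable g μ)
    {a : ℝ} (ha : 0 < a) {s : Set X} (hs : ∀ x ∈ s, a ≤ g x) :
    ENNReal.log (μ s) ≤ ((Real.log (∫ x, g x ∂μ) - Real.log a : ℝ) : EReal) := by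
  rcases eq_or_ne (μ s) 0 with h0 | h0
  · simp [h0]
  have hpos : 0 < μ.real s := ENNReal.toReal_pos h0 (measure_ne_top μ s)
  -- Markov's inequality on the superlevel set `{a ≤ g} ⊇ s`, so `s` need not be measurable.
  have hmarkov : a * μ.real s ≤ ∫ x, g x ∂μ :=
    (mul_le_mul_of_nonneg_left (measureReal_mono hs) ha.le).trans
      (mul_meas_ge_le_integral_of_nonneg (ae_of_all _ hg0) hg a)
  have hlog := Real.log_le_log (mul_pos ha hpos) hmarkov
  rw [Real.log_mul ha.ne' hpos.ne'] at hlog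
  rw [ENNReal.log_pos_real h0 (measure_ne_top μ s), EReal.coe_le_coe_iff]
  exact le_sub_iff_add_le'.2 hlog

section Orbital

variable {r : ι → ℕ} {N : ℕ}

lemma continuous_evalA (h : FAlg (gen r)) :
    Continuous fun B : ∀ i, Fin (r i) → Mat N => evalA B h := by
  induction h using FreeAlgebra.induction with
  | grade0 c => simp only [AlgHom.commutes]; exact continuous_const
  | grade1 x => simp only [evalA, FreeAlgebra.lift_ι_apply]; fun_prop
  | mul a b ha hb => simp only [map_mul]; exact ha.mul hb
  | add a b ha hb => simp only [map_add]; exact ha.add hb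

lemma continuous_conjFam (A : ∀ i, Fin (r i) → Mat N) :
    Continuous fun V : ι → UN N => conjFam V A := by
  refine continuous_pi fun i => continuous_pi fun j => ?_
  have hV : Continuous fun V : ι → UN N => (V i : Mat N) :=
    continuous_subtype_val.comp (continuous_apply i)
  exact (hV.mul continuous_const).mul hV.star

lemma continuous_gibbsWt (h : FAlg (gen r)) (A : ∀ i, Fin (r i) → Mat N) :
    Continuous (gibbsWt h A) :=
  Real.continuous_exp.comp <| continuous_const.mul <| Complex.continuous_re.comp <|
    ((continuous_evalA h).comp (continuous_conjFam A)).matrix_trace.div_const _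

lemma log_measure_orbSet_le [Fintype ι] (γN : Measure (UN N)) [IsFiniteMeasure γN] (R : ℝ)
    (τ : FAlg (gen r) →ₗ[ℂ] ℂ) (A : ∀ i, Fin (r i) → Mat N) {m : ℕ} {δ : ℝ}
    (p : FAlg (gen r)) {K : ℝ}
    (hK : ∀ B ∈ microFull R τ N m δ, (trN N (evalA B p)).re ≤ K) :
    ENNReal.log (Measure.pi (fun _ : ι => γN) (orbSet R τ A m δ)) ≤
      ((Real.log (∫ V, gibbsWt p A V ∂Measure.pi fun _ => γN) + (N : ℝ) ^ 2 * K : ℝ) :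
        EReal) := by
  have hint : Integrable (gibbsWt p A) (Measure.pi fun _ => γN) :=
    (continuous_gibbsWt p A).integrable_of_hasCompactSupport (.of_compactSpace _)
  have hlow : ∀ V ∈ orbSet R τ A m δ, Real.exp (-(N : ℝ) ^ 2 * K) ≤ gibbsWt p A V :=
    fun V hV => Real.exp_le_exp.2 <| by nlinarith [hK _ hV, sq_nonneg (N : ℝ)]
  refine (log_measure_le_log_integral_sub_log (g := gibbsWt p A) (fun V => (Real.exp_pos _).le)
    hint (Real.exp_pos _) hlow).trans_eq ?_
  rw [Real.log_exp, neg_mul, sub_neg_eq_add]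

lemma inv_sq_mul_iSup_log_measure_orbSet_le [Fintype ι] (γ : ∀ N, Measure (UN N))
    [∀ N, IsFiniteMeasure (γ N)] (R : ℝ) (τ : FAlg (gen r) →ₗ[ℂ] ℂ)
    (τs : ∀ i, FAlg (Fin (r i)) →ₗ[ℂ] ℂ) (p : FAlg (gen r)) {m m' : ℕ} {δ δ' K : ℝ}
    (hN : N ≠ 0) (hm : m ≤ m') (hδ : δ' ≤ δ)
    (hK : ∀ B ∈ microFull R τ N m' δ', (trN N (evalA B p)).re ≤ K) :
    ((((N : ℝ) ^ 2)⁻¹ : ℝ) : EReal) *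
        (⨆ A ∈ microProd R τs N m' δ',
          ENNReal.log (Measure.pi (fun _ : ι => γ N) (orbSet R τ A m' δ'))) ≤
      ((((N : ℝ) ^ 2)⁻¹ : ℝ) : EReal) * piOrbN γ R p τs N m δ + K := by
  have hc : (0 : EReal) ≤ ((((N : ℝ) ^ 2)⁻¹ : ℝ) : EReal) := EReal.coe_nonneg.2 (by positivity)
  have hsup : (⨆ A ∈ microProd R τs N m' δ',
      ENNReal.log (Measure.pi (fun _ : ι => γ N) (orbSet R τ A m' δ'))) ≤
        piOrbN γ R p τs N m δ + (((N : ℝ) ^ 2 * K : ℝ) : EReal) := by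
    refine iSup₂_le fun A hA => (log_measure_orbSet_le (γ N) R τ A p hK).trans ?_
    rw [EReal.coe_add]
    gcongr
    exact le_iSup₂_of_le A (microProd_mono hm hδ hA) le_rfl
  calc _ ≤ ((((N : ℝ) ^ 2)⁻¹ : ℝ) : EReal) *
        (piOrbN γ R p τs N m δ + (((N : ℝ) ^ 2 * K : ℝ) : EReal)) :=
        mul_le_mul_of_nonneg_left hsup hc
    _ = _ := by
        rw [EReal.left_distrib_of_nonneg_of_ne_top hc (EReal.coe_ne_top _), ← EReal.coe_mul,
          inv_mul_cancel_left₀ (by positivity)]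

theorem chiOrb_le_add_piOrb [Fintype ι] (γ : ∀ N, Measure (UN N)) [∀ N, IsFiniteMeasure (γ N)]
    (R : ℝ) (τ : FAlg (gen r) →ₗ[ℂ] ℂ) (hτ1 : τ 1 = 1) (p : FAlg (gen r)) :
    chiOrb γ R τ ≤ (((τ p).re : ℝ) : EReal) + piOrb γ R p (restr τ) := by
  have hre : ((τ p).re : EReal) ≠ ⊥ ∧ ((τ p).re : EReal) ≠ ⊤ :=
    ⟨EReal.coe_ne_bot _, EReal.coe_ne_top _⟩
  rw [add_comm, ← EReal.sub_le_iff_le_add (.inl hre.1) (.inl hre.2)]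
  refine le_iInf₂ fun m δ => le_iInf fun hδ => ?_
  rw [EReal.sub_le_iff_le_add (.inl hre.1) (.inl hre.2)]
  refine EReal.le_of_forall_pos_le_add fun ε hε => ?_
  obtain ⟨m₀, δ₀, hδ₀, happrox⟩ := microstateApprox hτ1 p ε hε
  have hK : ∀ N, N ≠ 0 → ∀ B ∈ microFull R τ N (max m m₀) (min δ δ₀),
      (trN N (evalA B p)).re ≤ (τ p).re + ε := fun N hN B hB => by
    have := (Complex.re_le_norm _).trans
      (happrox N hN B (microFull_mono (le_max_right m m₀) (min_le_right δ δ₀) hB))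
    rw [Complex.sub_re] at this
    linarith
  calc chiOrb γ R τ
      ≤ limsup (fun N : ℕ => ((((N : ℝ) ^ 2)⁻¹ : ℝ) : EReal) *
          ⨆ A ∈ microProd R (restr τ) N (max m m₀) (min δ δ₀),
            ENNReal.log ((Measure.pi fun _ : ι => γ N)
              (orbSet R τ A (max m m₀) (min δ δ₀)))) atTop :=
        iInf₂_le_of_le (max m m₀) (min δ δ₀) (iInf_le _ (lt_min hδ hδ₀))
    _ ≤ limsup (fun N : ℕ => ((((N : ℝ) ^ 2)⁻¹ : ℝ) : EReal) *
          piOrbN γ R p (restr τ) N m δ) atTop + (((τ p).re + ε : ℝ) : EReal) :=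
        EReal.limsup_le_limsup_add_of_eventually_le <| (eventually_ne_atTop 0).mono
          fun N hN => inv_sq_mul_iSup_log_measure_orbSet_le γ R τ _ p hN (le_max_left m m₀)
            (min_le_left δ δ₀) (hK N hN)
    _ = _ := by rw [EReal.coe_add, add_assoc]

end Orbital

theorem statement10_general {n : ℕ} (r : Fin n → ℕ) (R : ℝ)
    (γ : ∀ N, Measure (UN N)) [∀ N, IsProbabilityMeasure (γ N)]
    (τ : FAlg (gen r) →ₗ[ℂ] ℂ) (hτ : IsHermState τ) :
    (∀ p : FAlg (gen r), IsSA p →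
      chiOrb γ R τ ≤ (((τ p).re : ℝ) : EReal) + piOrb γ R p (restr τ)) ∧
    chiOrb γ R τ ≤ etaOrb γ R τ :=
  ⟨fun p _ => chiOrb_le_add_piOrb γ R τ hτ.1 p,
    le_iInf₂ fun p _ => chiOrb_le_add_piOrb γ R τ hτ.1 p⟩

/-- Theorem 3.5 (6): `χ_{orb,R}(τ) ≤ τ(p) + π_{orb,R}(p : (τ_i))`
for every self-adjoint `p`, and consequently `χ_{orb,R}(τ) ≤ η_{orb,R}(τ)`. -/
theorem statement10 {n : ℕ} (hn : 1 ≤ n) (r : Fin n → ℕ) (hr : ∀ i, 1 ≤ r i) (R : ℝ) (hR : 0 < R)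
    (γ : ∀ N, Measure (UN N)) [∀ N, IsProbabilityMeasure (γ N)]
    (hγ : ∀ N, (γ N).IsMulLeftInvariant)
    (τ : FAlg (gen r) →ₗ[ℂ] ℂ) (hτ : IsHermState τ) :
    (∀ p : FAlg (gen r), IsSA p →
      chiOrb γ R τ ≤ (((τ p).re : ℝ) : EReal) + piOrb γ R p (restr τ)) ∧
    chiOrb γ R τ ≤ etaOrb γ R τ :=
  statement10_general r R γ τ hτ

end OrbFP

end
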